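/- arXiv:2503.22850 — 5 statements merged into one kernel-verified Lean document; each statement's English description precedes it below -/
import Mathlib

section
/- If a learning dynamic model has finite regret (there exists β with ⟨p, x − x̄⟩_T ≥ β for all payoff trajectories p, all T > 0 and all x̄ ∈ Δₙ) and satisfies Nash stationarity (every equilibrium (p*, x*) satisfies x* ∈ argmax_{z ∈ Δₙ} zᵀp*), then it is equilibrium-independent passive: for every equilibrium (p*, x*), ⟨p − p*, x − x*⟩_T ≥ β for all T > 0. -/
open MeasureTheory

def dot {n : ℕ} (a b : Fin n → ℝ) : ℝ := ∑ i, a i * b i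

/-- finite regret + Nash stationarity imply EI-passivity. -/
theorem finite_regret_and_nash_stationarity_imply_EI_passivity
    {n : ℕ} (p : ℝ → Fin n → ℝ) (x : ℝ → Fin n → ℝ) (β : ℝ)
    (hx : ∀ t, x t ∈ stdSimplex ℝ (Fin n))
    (hp : Continuous p) (hxc : Continuous x)
    -- finite regret
    (hreg : ∀ T > (0:ℝ), ∀ xbar ∈ stdSimplex ℝ (Fin n),
      β ≤ ∫ t in (0:ℝ)..T, dot (p t) (x t - xbar))
    -- an equilibrium (p*, x*) which by Nash stationarity maximizes zᵀp* over the simplex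
    (pstar xstar : Fin n → ℝ) (hxstar : xstar ∈ stdSimplex ℝ (Fin n))
    (hnash : ∀ z ∈ stdSimplex ℝ (Fin n), dot z pstar ≤ dot xstar pstar) :
    ∀ T > (0:ℝ), β ≤ ∫ t in (0:ℝ)..T, dot (p t - pstar) (x t - xstar) := by
  intro T hT
  have hcx : ∀ i, Continuous (fun t => x t i) := fun i => (continuous_apply i).comp hxc
  have hcp : ∀ i, Continuous (fun t => p t i) := fun i => (continuous_apply i).comp hp
  have hcf : Continuous (fun t => dot (p t) (x t - xstar)) := by
    unfold dot
    exact continuous_finset_sum _ fun i _ =>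
      (hcp i).mul ((hcx i).sub continuous_const)
  have hcg : Continuous (fun t => dot pstar (x t - xstar)) := by
    unfold dot
    exact continuous_finset_sum _ fun i _ =>
      continuous_const.mul ((hcx i).sub continuous_const)
  have hsplit : ∀ t, dot (p t - pstar) (x t - xstar)
      = dot (p t) (x t - xstar) - dot pstar (x t - xstar) := by
    intro t
    unfold dot
    rw [← Finset.sum_sub_distrib]
    apply Finset.sum_congr rfl
    intro i _
    simp [Pi.sub_apply]
    ring
  have hIf : IntervalIntegrable (fun t => dot (p t) (x t - xstar)) volume 0 T :=
    hcf.intervalIntegrable _ _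
  have hIg : IntervalIntegrable (fun t => dot pstar (x t - xstar)) volume 0 T :=
    hcg.intervalIntegrable _ _
  have heq : (∫ t in (0:ℝ)..T, dot (p t - pstar) (x t - xstar))
      = (∫ t in (0:ℝ)..T, dot (p t) (x t - xstar))
        - ∫ t in (0:ℝ)..T, dot pstar (x t - xstar) := by
    rw [← intervalIntegral.integral_sub hIf hIg]
    exact intervalIntegral.integral_congr fun t _ => hsplit t
  have hgle : ∀ t, dot pstar (x t - xstar) ≤ 0 := by
    intro t
    have h1 : dot pstar (x t - xstar) = dot (x t) pstar - dot xstar pstar := by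
      unfold dot
      rw [← Finset.sum_sub_distrib]
      exact Finset.sum_congr rfl fun i _ => by simp [Pi.sub_apply]; ring
    rw [h1]
    linarith [hnash (x t) (hx t)]
  have hgint : (∫ t in (0:ℝ)..T, dot pstar (x t - xstar)) ≤ 0 := by
    have h := intervalIntegral.integral_nonneg (f := fun t => -dot pstar (x t - xstar)) (μ := volume)
      hT.le (fun t _ => neg_nonneg.2 (hgle t))
    rw [intervalIntegral.integral_neg] at h
    linarith
  have := hreg T hT xstar hxstar
  linarith [heq, hgint, this]
end

section
/- If a learning dynamic model is EI-passive with constant β (so ⟨p − p*, x − x*⟩_T ≥ β for every equilibrium (p*, x*) and all T), and every x̄ ∈ Δₙ is an equilibrium for the constant payoff vector 𝟙ₙ, then the model has finite regret: ⟨p, x − x̄⟩_T ≥ β for every x̄ ∈ Δₙ and all T > 0. -/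
open MeasureTheory

/-- EI-passivity with constant `β`, together with every point of the
simplex being an equilibrium for the constant payoff `𝟙ₙ`, implies finite regret. -/
theorem EI_passivity_implies_finite_regret
    {n : ℕ} (p : ℝ → Fin n → ℝ) (x : ℝ → Fin n → ℝ) (β : ℝ)
    -- abstract equilibrium predicate of the learning dynamic model
    (IsEquilibrium : (Fin n → ℝ) → (Fin n → ℝ) → Prop)
    (hx : ∀ t, x t ∈ stdSimplex ℝ (Fin n))
    -- EI-passivity
    (hEI : ∀ pstar xstar, IsEquilibrium pstar xstar →
      ∀ T > (0:ℝ), β ≤ ∫ t in (0:ℝ)..T, dot (p t - pstar) (x t - xstar))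
    -- every point of the simplex is an equilibrium for the all-ones payoff
    (hones : ∀ xbar ∈ stdSimplex ℝ (Fin n), IsEquilibrium (fun _ => 1) xbar) :
    ∀ xbar ∈ stdSimplex ℝ (Fin n), ∀ T > (0:ℝ),
      β ≤ ∫ t in (0:ℝ)..T, dot (p t) (x t - xbar) := by
  intro xbar hxb T hT
  have h := hEI _ _ (hones xbar hxb) T hT
  have heq : ∀ t, dot (p t - fun _ => (1:ℝ)) (x t - xbar) = dot (p t) (x t - xbar) := by
    intro t
    have hs : ∑ i, (x t i - xbar i) = 0 := by
      rw [Finset.sum_sub_distrib, (hx t).2, hxb.2, sub_self]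
    simp only [dot, Pi.sub_apply]
    have h2 : (∑ i, (p t i - 1) * (x t i - xbar i)) =
        (∑ i, p t i * (x t i - xbar i)) - ∑ i, (x t i - xbar i) := by
      rw [← Finset.sum_sub_distrib]; congr 1; ext i; ring
    rw [h2, hs, sub_zero]
  simpa [heq] using h
end

section
/- Suppose every x̄ ∈ Δₙ is an equilibrium of a learning dynamic for the constant payoff 𝟙ₙ. If there exists x̄ ∈ Δₙ and a payoff trajectory such that limsup_{T→∞} (−⟨p, x − x̄⟩_T) = ∞ (i.e., regret is unbounded), then the dynamic is not EI-passive: limsup_{T→∞} (−⟨p − 𝟙ₙ, x − x̄⟩_T) = ∞, violating any uniform lower bound for ⟨p − p*, x − x*⟩_T at the equilibrium (𝟙ₙ, x̄). -/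
open MeasureTheory

/-- if regret w.r.t. some `x̄` is unbounded, then the EI-passivity
inequality at the equilibrium `(𝟙ₙ, x̄)` is violated. -/
theorem unbounded_regret_implies_not_EI_passive
    {n : ℕ} (p : ℝ → Fin n → ℝ) (x : ℝ → Fin n → ℝ)
    (hx : ∀ t, x t ∈ stdSimplex ℝ (Fin n))
    (xbar : Fin n → ℝ) (hxbar : xbar ∈ stdSimplex ℝ (Fin n))
    -- unbounded regret: limsup_{T→∞} (−⟨p, x − x̄⟩_T) = ∞
    (hunb : ∀ M : ℝ, ∃ T > (0:ℝ),
      M ≤ -∫ t in (0:ℝ)..T, dot (p t) (x t - xbar)) :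
    (∀ M : ℝ, ∃ T > (0:ℝ),
      M ≤ -∫ t in (0:ℝ)..T, dot (p t - fun _ => 1) (x t - xbar)) ∧
    ¬ ∃ γ : ℝ, ∀ T > (0:ℝ),
      γ ≤ ∫ t in (0:ℝ)..T, dot (p t - fun _ => 1) (x t - xbar) := by
  have key : ∀ t, dot (p t - fun _ => 1) (x t - xbar) = dot (p t) (x t - xbar) := by
    intro t
    have h1 : ∑ i, (x t i - xbar i) = 0 := by
      rw [Finset.sum_sub_distrib, (hx t).2, hxbar.2, sub_self]
    simp only [dot, Pi.sub_apply, sub_mul, one_mul, Finset.sum_sub_distrib, h1, sub_zero]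
  have keyI : ∀ T : ℝ, (∫ t in (0:ℝ)..T, dot (p t - fun _ => 1) (x t - xbar))
      = ∫ t in (0:ℝ)..T, dot (p t) (x t - xbar) := by
    intro T; simp_rw [key]
  constructor
  · intro M
    obtain ⟨T, hT, hM⟩ := hunb M
    exact ⟨T, hT, by rw [keyI]; exact hM⟩
  · rintro ⟨γ, hγ⟩
    obtain ⟨T, hT, hM⟩ := hunb (-γ + 1)
    have h2 := hγ T hT
    rw [keyI] at h2
    linarith
end

section
/- If a time-invariant input-output operator H is incrementally passive, then it is δ-passive with bound 0: for continuously differentiable input-output pairs (u, y = Hu), ∫_0^T u̇(t)ᵀ ẏ(t) dt ≥ 0 for all T > 0. (Proof by applying incremental passivity to u and its time-shift u(· − τ), expanding to second order in τ, dividing by τ², and letting τ → 0.) -/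
/-!
Shifting the input by `τ` shifts the output by `τ` (time invariance), so incremental passivity
applied to `u` and `u(· - τ)` says that `∫₀ᵀ ⟪y(t) - y(t - τ), u(t) - u(t - τ)⟫ dt ≥ 0`.
Dividing by `τ²` turns both differences into backward difference quotients, which converge to
`y'` and `u'` as `τ → 0`, boundedly on `[0, T]` by the mean value inequality; dominated
convergence then gives `∫₀ᵀ ⟪u', y'⟫ ≥ 0`.
-/

open MeasureTheory Filter Topology Set Function

section Dot

variable {n : ℕ}

theorem dot_eq_dotProduct (a b : Fin n → ℝ) : dot a b = a ⬝ᵥ b := rfl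

theorem dot_comm (a b : Fin n → ℝ) : dot a b = dot b a := dotProduct_comm a b

theorem dot_smul_smul (c d : ℝ) (a b : Fin n → ℝ) : dot (c • a) (d • b) = c * d * dot a b := by
  simp only [dot_eq_dotProduct, smul_dotProduct, dotProduct_smul, smul_eq_mul]
  ring

theorem continuous_uncurry_dot : Continuous (uncurry (dot (n := n))) :=
  continuous_fst.dotProduct continuous_snd

end Dot

section Slope

variable {E : Type*} [NormedAddCommGroup E] [NormedSpace ℝ E]

theorem slope_sub_left (g : ℝ → E) (t τ : ℝ) : slope g (t - τ) t = τ⁻¹ • (g t - g (t - τ)) := by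
  rw [slope_def_module, sub_sub_cancel]

theorem HasDerivAt.tendsto_slope_sub_left {g : ℝ → E} {g' : E} {t : ℝ} (h : HasDerivAt g g' t) :
    Tendsto (fun τ => slope g (t - τ) t) (𝓝[≠] 0) (𝓝 g') := by
  have hshift : Tendsto (fun τ : ℝ => t - τ) (𝓝[≠] 0) (𝓝[≠] t) :=
    tendsto_nhdsWithin_of_tendsto_nhds_of_eventually_within _
      (((continuous_sub_left t).tendsto' 0 t (sub_zero t)).mono_left nhdsWithin_le_nhds)
      (eventually_mem_nhdsWithin.mono fun τ hτ => by simpa using hτ)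
  exact ((hasDerivAt_iff_tendsto_slope.mp h).comp hshift).congr fun τ => slope_comm g t (t - τ)

theorem Convex.norm_slope_le_of_norm_hasDerivWithin_le {g g' : ℝ → E} {s : Set ℝ} {C : ℝ}
    (hs : Convex ℝ s) (hg : ∀ x ∈ s, HasDerivWithinAt g (g' x) s x)
    (bound : ∀ x ∈ s, ‖g' x‖ ≤ C) {a b : ℝ} (ha : a ∈ s) (hb : b ∈ s) : ‖slope g a b‖ ≤ C := by
  rcases eq_or_ne a b with rfl | hab
  · simpa only [slope_same, norm_zero] using (norm_nonneg _).trans (bound a ha)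
  rw [slope_def_module, norm_smul, norm_inv,
    inv_mul_le_iff₀ (norm_pos_iff.2 (sub_ne_zero.2 hab.symm)), mul_comm]
  exact hs.norm_image_sub_le_of_norm_hasDerivWithin_le hg bound ha hb

end Slope

section DominatedConvergence

variable {E F G : Type*} [NormedAddCommGroup E] [NormedSpace ℝ E] [ProperSpace E]
  [NormedAddCommGroup F] [NormedSpace ℝ F] [ProperSpace F] [NormedAddCommGroup G] [NormedSpace ℝ G]
  {u : ℝ → E} {y : ℝ → F} {u' : ℝ → E} {y' : ℝ → F} {Φ : E → F → G}

theorem tendsto_intervalIntegral_slope_sub_left (hu : ∀ t, HasDerivAt u (u' t) t)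
    (hu' : Continuous u') (hy : ∀ t, HasDerivAt y (y' t) t) (hy' : Continuous y')
    (hΦ : Continuous (uncurry Φ)) (a b : ℝ) :
    Tendsto (fun τ => ∫ t in a..b, Φ (slope u (t - τ) t) (slope y (t - τ) t)) (𝓝[≠] 0)
      (𝓝 (∫ t in a..b, Φ (u' t) (y' t))) := by
  set s := Icc (min a b - 1) (max a b + 1)
  obtain ⟨Mu, hMu⟩ := isCompact_Icc.exists_bound_of_continuousOn (s := s) hu'.continuousOn
  obtain ⟨My, hMy⟩ := isCompact_Icc.exists_bound_of_continuousOn (s := s) hy'.continuousOn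
  obtain ⟨C, hC⟩ := ((isCompact_closedBall (0 : E) Mu).prod
    (isCompact_closedBall (0 : F) My)).exists_bound_of_continuousOn hΦ.continuousOn
  have hbound : ∀ τ : ℝ, |τ| ≤ 1 → ∀ t ∈ uIoc a b,
      ‖Φ (slope u (t - τ) t) (slope y (t - τ) t)‖ ≤ C := by
    intro τ hτ t ht
    obtain ⟨hta, htb⟩ := uIoc_subset_uIcc ht
    obtain ⟨hτ₁, hτ₂⟩ := abs_le.mp hτ
    have hts : t ∈ s := ⟨by linarith, by linarith⟩
    have hτs : t - τ ∈ s := ⟨by linarith, by linarith⟩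
    refine hC (_, _) ⟨?_, ?_⟩ <;> rw [mem_closedBall_zero_iff]
    · exact (convex_Icc _ _).norm_slope_le_of_norm_hasDerivWithin_le
        (fun x _ => (hu x).hasDerivWithinAt) hMu hτs hts
    · exact (convex_Icc _ _).norm_slope_le_of_norm_hasDerivWithin_le
        (fun x _ => (hy x).hasDerivWithinAt) hMy hτs hts
  have hu_cont : Continuous u := Differentiable.continuous fun t => (hu t).differentiableAt
  have hy_cont : Continuous y := Differentiable.continuous fun t => (hy t).differentiableAt
  refine intervalIntegral.tendsto_integral_filter_of_dominated_convergence (fun _ => C)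
    (Eventually.of_forall fun τ => ?_) ?_ intervalIntegrable_const
    (ae_of_all _ fun t _ => (hΦ.tendsto _).comp
      ((hu t).tendsto_slope_sub_left.prodMk_nhds (hy t).tendsto_slope_sub_left))
  · simp only [slope_sub_left]
    exact (hΦ.comp (f := fun t => (τ⁻¹ • (u t - u (t - τ)), τ⁻¹ • (y t - y (t - τ))))
      (by fun_prop)).aestronglyMeasurable
  · have hsmall : ∀ᶠ τ in 𝓝[≠] (0 : ℝ), |τ| ≤ 1 := nhdsWithin_le_nhds <| by
      filter_upwards [Metric.closedBall_mem_nhds (0 : ℝ) one_pos] with τ hτ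
      simpa only [Metric.mem_closedBall, dist_zero_right, Real.norm_eq_abs] using hτ
    filter_upwards [hsmall] with τ hτ
    exact ae_of_all _ (hbound τ hτ)

end DominatedConvergence

/-- a time-invariant incrementally passive operator is δ-passive
with bound 0 on smooth input-output pairs. -/
theorem incremental_passive_implies_delta_passive
    {n : ℕ} (U : Set (ℝ → Fin n → ℝ))
    (H : (ℝ → Fin n → ℝ) → (ℝ → Fin n → ℝ))
    -- time invariance: shifts of admissible inputs are admissible and H commutes with shifts
    (hshift : ∀ u ∈ U, ∀ τ : ℝ, (fun t => u (t - τ)) ∈ U ∧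
      H (fun t => u (t - τ)) = fun t => H u (t - τ))
    -- incremental passivity
    (hinc : ∀ u ∈ U, ∀ v ∈ U, ∀ T > (0:ℝ),
      0 ≤ ∫ t in (0:ℝ)..T, dot (H u t - H v t) (u t - v t))
    -- a C² admissible input-output pair (u, y = Hu) with derivatives u', y'
    (u : ℝ → Fin n → ℝ) (hu : u ∈ U)
    (u' y' : ℝ → Fin n → ℝ)
    (hu' : ∀ t, HasDerivAt u (u' t) t) (hu'' : ContDiff ℝ 1 u')
    (hy' : ∀ t, HasDerivAt (H u) (y' t) t) (hy'' : ContDiff ℝ 1 y') :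
    ∀ T > (0:ℝ), 0 ≤ ∫ t in (0:ℝ)..T, dot (u' t) (y' t) := by
  intro T hT
  have hquot : ∀ τ : ℝ, 0 ≤ ∫ t in (0:ℝ)..T, dot (slope u (t - τ) t) (slope (H u) (t - τ) t) := by
    intro τ
    obtain ⟨hshift_mem, hshift_comm⟩ := hshift u hu τ
    have hpassive := hinc u hu _ hshift_mem T hT
    rw [hshift_comm] at hpassive
    simp only [slope_sub_left, dot_smul_smul, intervalIntegral.integral_const_mul]
    exact mul_nonneg (mul_self_nonneg _) (by simpa only [dot_comm] using hpassive)
  exact ge_of_tendsto (tendsto_intervalIntegral_slope_sub_left hu' hu''.continuous hy'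
    hy''.continuous continuous_uncurry_dot 0 T) (Eventually.of_forall hquot)
end

section
/- In a contractive game, the set of Nash equilibria is convex. -/
lemma dot_sub_left {n : ℕ} (a b c : Fin n → ℝ) :
    dot (a - b) c = dot a c - dot b c := by
  simp [dot, sub_mul, Finset.sum_sub_distrib]

lemma dot_sub_right {n : ℕ} (a b c : Fin n → ℝ) :
    dot a (b - c) = dot a b - dot a c := by
  simp [dot, mul_sub, Finset.sum_sub_distrib]

lemma dot_add_left {n : ℕ} (a b c : Fin n → ℝ) :
    dot (a + b) c = dot a c + dot b c := by
  simp [dot, add_mul, Finset.sum_add_distrib]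

lemma dot_smul_left {n : ℕ} (t : ℝ) (a b : Fin n → ℝ) :
    dot (t • a) b = t * dot a b := by
  simp [dot, Finset.mul_sum, mul_assoc]

lemma dot_cont_left {n : ℕ} (a : Fin n → ℝ) :
    Continuous (fun b : Fin n → ℝ => dot a b) := by
  unfold dot
  exact continuous_finset_sum _ fun i _ =>
    (continuous_const.mul (continuous_apply i))

/-- in a contractive game, the set of Nash equilibria is convex. -/
theorem contractive_nash_set_convex
    {n : ℕ} (F : (Fin n → ℝ) → (Fin n → ℝ))
    (hF : Continuous F)
    (hcontr : ∀ x ∈ stdSimplex ℝ (Fin n), ∀ y ∈ stdSimplex ℝ (Fin n),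
      dot (x - y) (F x - F y) ≤ 0) :
    Convex ℝ {x | x ∈ stdSimplex ℝ (Fin n) ∧
      ∀ z ∈ stdSimplex ℝ (Fin n), dot z (F x) ≤ dot x (F x)} := by
  -- Minty reformulation
  have hset : {x | x ∈ stdSimplex ℝ (Fin n) ∧
      ∀ z ∈ stdSimplex ℝ (Fin n), dot z (F x) ≤ dot x (F x)}
      = {x | x ∈ stdSimplex ℝ (Fin n) ∧
      ∀ z ∈ stdSimplex ℝ (Fin n), dot (z - x) (F z) ≤ 0} := by
    ext x
    simp only [Set.mem_setOf_eq]
    constructor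
    · rintro ⟨hx, h⟩
      refine ⟨hx, fun z hz => ?_⟩
      have h1 : dot (z - x) (F x) ≤ 0 := by
        have := h z hz
        rw [dot_sub_left]; linarith
      have h2 : dot (z - x) (F z - F x) ≤ 0 := hcontr z hz x hx
      rw [dot_sub_right] at h2
      linarith
    · rintro ⟨hx, h⟩
      refine ⟨hx, fun z hz => ?_⟩
      -- Minty: use points x + t • (z - x)
      have key : dot (z - x) (F x) ≤ 0 := by
        have hev : ∀ t ∈ Set.Ioc (0:ℝ) 1,
            dot (z - x) (F (x + t • (z - x))) ≤ 0 := by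
          intro t ht
          set w := x + t • (z - x) with hw
          have hwmem : w ∈ stdSimplex ℝ (Fin n) := by
            have hc := (convex_stdSimplex ℝ (Fin n)) hx hz
              (by linarith [ht.2] : (0:ℝ) ≤ 1 - t) ht.1.le (by ring)
            have : (1 - t) • x + t • z = w := by
              funext i
              simp [hw, Pi.smul_apply, smul_eq_mul]
              ring
            rwa [this] at hc
          have := h w hwmem
          have hws : w - x = t • (z - x) := by
            funext i; simp [hw]
          rw [hws, dot_smul_left] at this
          by_contra hgt
          push_neg at hgt
          nlinarith [ht.1]
        have hcont : Continuous (fun t : ℝ => dot (z - x) (F (x + t • (z - x)))) := by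
          exact (dot_cont_left (z - x)).comp (hF.comp
            (continuous_const.add (continuous_id.smul continuous_const)))
        have htend : Filter.Tendsto (fun t : ℝ => dot (z - x) (F (x + t • (z - x))))
            (nhdsWithin 0 (Set.Ioi 0)) (nhds (dot (z - x) (F x))) := by
          have h0 : dot (z - x) (F (x + (0:ℝ) • (z - x))) = dot (z - x) (F x) := by
            simp
          have h1 : Filter.Tendsto (fun t : ℝ => dot (z - x) (F (x + t • (z - x))))
              (nhdsWithin 0 (Set.Ioi 0)) (nhds (dot (z - x) (F (x + (0:ℝ) • (z - x))))) :=
            (hcont.tendsto 0).mono_left nhdsWithin_le_nhds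
          rwa [h0] at h1
        refine le_of_tendsto htend ?_
        filter_upwards [Ioc_mem_nhdsGT_of_mem (Set.mem_Ico.mpr ⟨le_refl 0, zero_lt_one⟩)]
          with t ht using hev t ht
      rw [dot_sub_left] at key
      linarith
  rw [hset]
  rintro x ⟨hx, hxh⟩ y ⟨hy, hyh⟩ a b ha hb hab
  refine ⟨(convex_stdSimplex ℝ (Fin n)) hx hy ha hb hab, fun z hz => ?_⟩
  have : z - (a • x + b • y) = a • (z - x) + b • (z - y) := by
    funext i
    simp only [Pi.sub_apply, Pi.add_apply, Pi.smul_apply, smul_eq_mul]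
    linear_combination (-z i) * hab
  rw [this, dot_add_left, dot_smul_left, dot_smul_left]
  have h1 := hxh z hz
  have h2 := hyh z hz
  nlinarith
end
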